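/- Let N ≥ 2 be an integer and 2 ≤ p ≤ N. If k ≤ -(N-1)/(p-1), then E_{p,N,k}[cos](θ) ≥ 0 for every θ ∈ (0, π/2) (u = r^k·cos(θ) is p-subharmonic in ℝ^N₊); and if k ∈ [-(p+N-3)/(2p-3), 0), then E_{p,N,k}[cos](θ) ≤ 0 for every θ ∈ (0, π/2) (u = r^k·cos(θ) is p-superharmonic in ℝ^N₊). -/

import Mathlib

noncomputable section
open Real Set

/-- The differential expression `E_{p,N,k}[f](θ)` whose sign coincides with the sign of the
`p`-Laplacian of the quasiradial function `u(r,θ) = r^k · f(θ)` in the upper half-space. -/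
def Ecal (p : ℝ) (N : ℕ) (k : ℝ) (f : ℝ → ℝ) (θ : ℝ) : ℝ :=
  ((p - 1) * (deriv f θ) ^ 2 + k ^ 2 * (f θ) ^ 2) * deriv (deriv f) θ
    + k * ((2 * p - 3) * k + (N : ℝ) - p) * f θ * (deriv f θ) ^ 2
    + k ^ 3 * (k * (p - 1) + (N : ℝ) - p) * (f θ) ^ 3
    + ((N : ℝ) - 2) * ((deriv f θ) ^ 2 + k ^ 2 * (f θ) ^ 2) * deriv f θ * Real.cot θ

/-! For `f = cos`, `E` factors as
`cos θ · (k - 1) · (((2p-3)k + p+N-3) sin² θ + k² ((p-1)k + N-1) cos² θ)`,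
so on `(0, π/2)` its sign is read off the two linear factors `(2p-3)k + p+N-3` and
`(p-1)k + N-1`, which vanish at the two thresholds of the statement. The identity
`(p-1)((2p-3)k + p+N-3) = (2p-3)((p-1)k + N-1) - (p-2)(N-p)` shows that for `2 ≤ p ≤ N`
the thresholds are ordered so that each range of `k` fixes the sign of both factors. -/

lemma Ecal_cos_eq (p : ℝ) (N : ℕ) (k : ℝ) {θ : ℝ} (hsin : sin θ ≠ 0) :
    Ecal p N k cos θ = cos θ * (k - 1) *
      (((2 * p - 3) * k + (p + N - 3)) * sin θ ^ 2
        + k ^ 2 * ((p - 1) * k + (N - 1)) * cos θ ^ 2) := by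
  have hcos : deriv cos = fun x => -sin x := deriv_cos'
  simp only [Ecal, hcos, deriv.fun_neg, Real.deriv_sin, cot_eq_cos_div_sin]
  field_simp
  ring

lemma threshold_coeffs_relation (p N k : ℝ) :
    (p - 1) * ((2 * p - 3) * k + (p + N - 3))
      = (2 * p - 3) * ((p - 1) * k + (N - 1)) - (p - 2) * (N - p) := by
  ring

lemma coeffs_nonpos_of_le_neg_div {p N k : ℝ} (hp : 2 ≤ p) (hpN : p ≤ N)
    (hk : k ≤ -((N - 1) / (p - 1))) :
    (p - 1) * k + (N - 1) ≤ 0 ∧ (2 * p - 3) * k + (p + N - 3) ≤ 0 := by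
  have ha : (p - 1) * k + (N - 1) ≤ 0 := by
    have := (div_le_iff₀ (by linarith : (0 : ℝ) < p - 1)).mp (le_neg.mp hk)
    linarith
  refine ⟨ha, ?_⟩
  nlinarith [threshold_coeffs_relation p N k, mul_nonneg (sub_nonneg.mpr hp) (sub_nonneg.mpr hpN)]

lemma coeffs_nonneg_of_neg_div_le {p N k : ℝ} (hp : 2 ≤ p) (hpN : p ≤ N)
    (hk : -((p + N - 3) / (2 * p - 3)) ≤ k) :
    0 ≤ (2 * p - 3) * k + (p + N - 3) ∧ 0 ≤ (p - 1) * k + (N - 1) := by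
  have hb : 0 ≤ (2 * p - 3) * k + (p + N - 3) := by
    have := (le_div_iff₀ (by linarith : (0 : ℝ) < 2 * p - 3)).mp (neg_le.mp hk)
    linarith
  refine ⟨hb, ?_⟩
  nlinarith [threshold_coeffs_relation p N k, mul_nonneg (sub_nonneg.mpr hp) (sub_nonneg.mpr hpN)]

lemma Ecal_cos_nonneg {p : ℝ} {N : ℕ} {k θ : ℝ} (hθ : θ ∈ Ioo 0 (π / 2)) (hk : k ≤ 1)
    (ha : (p - 1) * k + (N - 1) ≤ 0) (hb : (2 * p - 3) * k + (p + N - 3) ≤ 0) :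
    0 ≤ Ecal p N k cos θ := by
  have hcos : 0 < cos θ := cos_pos_of_mem_Ioo ⟨by linarith [hθ.1, pi_pos], hθ.2⟩
  have hsin : 0 < sin θ := sin_pos_of_pos_of_lt_pi hθ.1 (by linarith [hθ.2, pi_pos])
  rw [Ecal_cos_eq p N k hsin.ne']
  refine mul_nonneg_of_nonpos_of_nonpos (mul_nonpos_of_nonneg_of_nonpos hcos.le (by linarith)) ?_
  have hka : k ^ 2 * ((p - 1) * k + (N - 1)) ≤ 0 := mul_nonpos_of_nonneg_of_nonpos (sq_nonneg k) ha
  exact add_nonpos (mul_nonpos_of_nonpos_of_nonneg hb (sq_nonneg _))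
    (mul_nonpos_of_nonpos_of_nonneg hka (sq_nonneg _))

lemma Ecal_cos_nonpos {p : ℝ} {N : ℕ} {k θ : ℝ} (hθ : θ ∈ Ioo 0 (π / 2)) (hk : k ≤ 1)
    (ha : 0 ≤ (p - 1) * k + (N - 1)) (hb : 0 ≤ (2 * p - 3) * k + (p + N - 3)) :
    Ecal p N k cos θ ≤ 0 := by
  have hcos : 0 < cos θ := cos_pos_of_mem_Ioo ⟨by linarith [hθ.1, pi_pos], hθ.2⟩
  have hsin : 0 < sin θ := sin_pos_of_pos_of_lt_pi hθ.1 (by linarith [hθ.2, pi_pos])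
  rw [Ecal_cos_eq p N k hsin.ne']
  refine mul_nonpos_of_nonpos_of_nonneg (mul_nonpos_of_nonneg_of_nonpos hcos.le (by linarith)) ?_
  positivity

theorem Ecal_cos_sign_p_between_two_N_general (N : ℕ) (p : ℝ) (hp1 : 2 ≤ p)
    (hp2 : p ≤ (N : ℝ)) (k : ℝ) :
    (k ≤ -(((N : ℝ) - 1) / (p - 1)) →
      ∀ θ ∈ Ioo (0 : ℝ) (π / 2), 0 ≤ Ecal p N k Real.cos θ) ∧
    (k ∈ Ico (-((p + (N : ℝ) - 3) / (2 * p - 3))) 0 →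
      ∀ θ ∈ Ioo (0 : ℝ) (π / 2), Ecal p N k Real.cos θ ≤ 0) := by
  constructor
  · intro hk θ hθ
    obtain ⟨ha, hb⟩ := coeffs_nonpos_of_le_neg_div hp1 hp2 hk
    exact Ecal_cos_nonneg hθ (by nlinarith) ha hb
  · rintro ⟨hk_ge, hk_neg⟩ θ hθ
    obtain ⟨hb, ha⟩ := coeffs_nonneg_of_neg_div_le hp1 hp2 hk_ge
    exact Ecal_cos_nonpos hθ (by linarith) ha hb

/-- For `2 ≤ p ≤ N`: `u = r^k cos θ` is `p`-subharmonic for `k ≤ -(N-1)/(p-1)` and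
`p`-superharmonic for `k ∈ [-(p+N-3)/(2p-3), 0)`. -/
theorem Ecal_cos_sign_p_between_two_N (N : ℕ) (hN : 2 ≤ N) (p : ℝ) (hp1 : 2 ≤ p)
    (hp2 : p ≤ (N : ℝ)) (k : ℝ) :
    (k ≤ -(((N : ℝ) - 1) / (p - 1)) →
      ∀ θ ∈ Ioo (0 : ℝ) (π / 2), 0 ≤ Ecal p N k Real.cos θ) ∧
    (k ∈ Ico (-((p + (N : ℝ) - 3) / (2 * p - 3))) 0 →
      ∀ θ ∈ Ioo (0 : ℝ) (π / 2), Ecal p N k Real.cos θ ≤ 0) :=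
  Ecal_cos_sign_p_between_two_N_general N p hp1 hp2 k
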